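/- arXiv:2006.14937 — 2 statements merged into one kernel-verified Lean document; each statement's English description precedes it below -/
import Mathlib

section
/- Inconsistency of mean-imputation classification: There exist a distribution over (X₁, X₂) with both variances bounded below by τ > 0, and for every ε > 0 a conditional class rule p(y=1 | x₁, x₂) = 1{|x₂ − E[X₂ | x₁]| > ε}, such that the classifier that imputes the missing X₂ by its conditional mean E[X₂ | x₁] and then applies the Bayes rule predicts Y = 0 always, and as ε → 0 its misclassification error under missing X₂ tends to P(X₂ ≠ E[X₂|X₁]) (which can be made arbitrarily close to 1), while the Bayes error given only X₁ observed, for the optimal marginalising classifier, tends to 0. -/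
open MeasureTheory ProbabilityTheory Filter Topology

/-!
Take `X₁, X₂` independent standard Gaussians. By independence `E[X₂ | X₁] = E[X₂] = 0`, so the
imputed point `(x₁, 0)` always gets label `0`. The error of that classifier is `P(|X₂| > ε)`,
which increases to `P(X₂ ≠ 0) = 1` as `ε ↓ 0`, while the classifier predicting `1` errs with
probability `P(|X₂| ≤ ε)`, which decreases to `P(X₂ = 0) = 0` because `X₂` has no atom.
-/

section Discrepancy

variable {α : Type*} [MeasurableSpace α] {μ : Measure α} [IsFiniteMeasure μ] {f g : α → ℝ}

lemma tendsto_measureReal_abs_sub_le_nhdsGT (hf : Measurable f) (hg : Measurable g) :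
    Tendsto (fun ε : ℝ => μ.real {x | |f x - g x| ≤ ε}) (𝓝[>] 0)
      (𝓝 (μ.real {x | f x = g x})) := by
  have hinter : (⋂ ε > (0 : ℝ), {x | |f x - g x| ≤ ε}) = {x | f x = g x} := by
    ext x
    simp only [Set.mem_iInter, Set.mem_ofPred_eq]
    rw [← sub_eq_zero, ← abs_nonpos_iff]
    exact ⟨fun h => le_of_forall_pos_le_add fun ε hε => by simpa using h ε hε,
      fun h ε hε => h.trans hε.le⟩
  have hlim := tendsto_measure_biInter_gt (μ := μ) (a := (0 : ℝ))
    (s := fun ε => {x | |f x - g x| ≤ ε})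
    (fun ε _ => (measurableSet_le (by fun_prop) measurable_const).nullMeasurableSet)
    (fun _ _ _ hij _ hx => le_trans hx hij) ⟨1, one_pos, measure_ne_top μ _⟩
  rw [hinter] at hlim
  exact (ENNReal.tendsto_toReal (measure_ne_top μ _)).comp hlim

lemma tendsto_measureReal_lt_abs_sub_nhdsGT (hf : Measurable f) (hg : Measurable g) :
    Tendsto (fun ε : ℝ => μ.real {x | ε < |f x - g x|}) (𝓝[>] 0)
      (𝓝 (μ.real {x | f x ≠ g x})) := by
  have hcompl (ε : ℝ) :
      μ.real {x | ε < |f x - g x|} = μ.real Set.univ - μ.real {x | |f x - g x| ≤ ε} := by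
    have hs : MeasurableSet {x | |f x - g x| ≤ ε} := measurableSet_le (by fun_prop) measurable_const
    rw [← measureReal_compl hs]
    congr 1
    ext x
    simp [not_le]
  rw [show {x | f x ≠ g x} = {x | f x = g x}ᶜ from rfl,
    measureReal_compl (measurableSet_eq_fun hf hg)]
  simp_rw [hcompl]
  exact tendsto_const_nhds.sub (tendsto_measureReal_abs_sub_le_nhdsGT hf hg)

end Discrepancy

section Product

variable {α β E : Type*} [MeasurableSpace α] [MeasurableSpace β]
  [NormedAddCommGroup E] [NormedSpace ℝ E] [CompleteSpace E]
  {μ : Measure α} {ν : Measure β} [IsProbabilityMeasure μ] [IsProbabilityMeasure ν]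

lemma condExp_comp_snd_prod {f : β → E} (hf : StronglyMeasurable f) :
    (μ.prod ν)[fun p => f p.2 | MeasurableSpace.comap Prod.fst inferInstance]
      =ᵐ[μ.prod ν] fun _ => ∫ y, f y ∂ν := by
  have hindep : IndepFun Prod.snd Prod.fst (μ.prod ν) :=
    (indepFun_prod (X := id) (Y := id) measurable_id measurable_id).symm
  have hmeas : StronglyMeasurable[MeasurableSpace.comap Prod.snd inferInstance]
      fun p : α × β => f p.2 :=
    hf.comp_measurable (comap_measurable Prod.snd)
  filter_upwards [condExp_indep_eq measurable_snd.comap_le measurable_fst.comap_le hmeas hindep]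
    with p hp
  rw [hp, integral_fun_snd, probReal_univ, one_smul]

end Product

/-- inconsistency of conditional-mean imputation. There exist `τ > 0` and a
(continuous) joint distribution `μ` of `(X₁, X₂)` with both variances at least `τ`, with
`m(x₁)` a version of the conditional mean `E[X₂ | X₁ = x₁]`, such that for every `ε > 0` and
the label rule `y(x₁,x₂) = 1{|x₂ − m(x₁)| > ε}`: (a) the classifier that imputes the missing
`X₂` by `m(x₁)` and applies the label rule always predicts `0`; (b) its misclassification
error `μ{|X₂ − m(X₁)| > ε}` tends, as `ε → 0⁺`, to `μ{X₂ ≠ m(X₁)}`, which equals `1`; while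
(c) the error of the optimal marginalising classifier given only `X₁` (here, predicting `1`)
tends to `0` as `ε → 0⁺`. -/
theorem mean_imputation_inconsistent :
    ∃ τ : ℝ, 0 < τ ∧
    ∃ μ : Measure (ℝ × ℝ), IsProbabilityMeasure μ ∧
    ∃ m : ℝ → ℝ, Measurable m ∧
      (fun p : ℝ × ℝ => m p.1)
        =ᵐ[μ] μ[(fun p : ℝ × ℝ => p.2) | MeasurableSpace.comap Prod.fst inferInstance] ∧
      τ ≤ variance (fun p : ℝ × ℝ => p.1) μ ∧
      τ ≤ variance (fun p : ℝ × ℝ => p.2) μ ∧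
      (∀ ε : ℝ, 0 < ε → ∀ x₁ : ℝ,
        (if ε < |m x₁ - m x₁| then (1 : ℕ) else 0) = 0) ∧
      Tendsto (fun ε : ℝ => (μ {p : ℝ × ℝ | ε < |p.2 - m p.1|}).toReal)
        (nhdsWithin 0 (Set.Ioi 0))
        (nhds ((μ {p : ℝ × ℝ | p.2 ≠ m p.1}).toReal)) ∧
      μ {p : ℝ × ℝ | p.2 ≠ m p.1} = 1 ∧
      Tendsto (fun ε : ℝ => (μ {p : ℝ × ℝ | ¬ ε < |p.2 - m p.1|}).toReal)
        (nhdsWithin 0 (Set.Ioi 0)) (nhds 0) := by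
  have : NullSingletonClass (gaussianReal 0 1) := nullSingletonClass_gaussianReal one_ne_zero
  set μ := (gaussianReal 0 1).prod (gaussianReal 0 1)
  have hnull : μ {p | p.2 = 0} = 0 :=
    (measurePreserving_snd.measure_preimage (measurableSet_singleton 0).nullMeasurableSet).trans
      (measure_singleton 0)
  have hvar : Var[id; gaussianReal 0 1] = 1 := by simp [variance_id_gaussianReal]
  refine ⟨1, one_pos, μ, inferInstance, fun _ => 0, measurable_const, ?_, ?_, ?_, ?_, ?_, ?_, ?_⟩
  · simpa [integral_id_gaussianReal] using (condExp_comp_snd_prod (μ := gaussianReal 0 1)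
      (ν := gaussianReal 0 1) stronglyMeasurable_id).symm
  · exact ((measurePreserving_fst.variance_fun_comp (f := id) aemeasurable_id).trans hvar).ge
  · exact ((measurePreserving_snd.variance_fun_comp (f := id) aemeasurable_id).trans hvar).ge
  · intro ε hε x₁
    simp [hε.le]
  · exact tendsto_measureReal_lt_abs_sub_nhdsGT measurable_snd measurable_const
  · exact (prob_compl_eq_one_iff (measurableSet_eq_fun measurable_snd measurable_const)).2 hnull
  · simpa only [not_lt, measureReal_def, hnull, ENNReal.toReal_zero] using
      tendsto_measureReal_abs_sub_le_nhdsGT (μ := μ) (g := fun _ => 0) measurable_snd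
        measurable_const
end

section
/- If (f_n) is a sequence of Bayes-consistent probabilistic classifiers (each f_n : X → Δ^K with risk converging to the Bayes risk as n → ∞, and in fact with conditional probability estimates converging in the appropriate sense), then for any fixed ensemble size T, the averaged classifier g_n(x) = argmax_y (1/T) ∑_{t=1}^T f_n^{(t)}(x)(y), built from T such consistent sequences, is also Bayes consistent. -/
open MeasureTheory Filter Topology

/-- consistency of averaged (ensemble) probabilistic classifiers. If each of
`T` sequences of probabilistic classifiers `f t n : X → Δ^K` has conditional-probability
estimates converging in `L¹(μ)` to the true conditional `pstar`, then the average
`(1/T) ∑_t f t n` also converges in `L¹(μ)` to `pstar`, and the induced plug-in (argmax)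
classifier `g n` is Bayes consistent: its risk `∫ (1 − pstar x (g n x)) dμ` converges to the
Bayes risk `∫ (1 − max_y pstar x y) dμ`. -/
theorem ensemble_of_consistent_is_consistent
    {X : Type*} [MeasurableSpace X] (K T : ℕ) (hK : 0 < K) (hT : 0 < T)
    (μ : Measure X) [IsProbabilityMeasure μ]
    (f : Fin T → ℕ → X → Fin K → ℝ) (pstar : X → Fin K → ℝ)
    (hmeas : ∀ t n y, Measurable fun x => f t n x y)
    (hpm : ∀ y, Measurable fun x => pstar x y)
    (hnn : ∀ t n x y, 0 ≤ f t n x y) (hsum1 : ∀ t n x, ∑ y, f t n x y = 1)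
    (hps0 : ∀ x y, 0 ≤ pstar x y) (hps1 : ∀ x, ∑ y, pstar x y = 1)
    (hcons : ∀ t, Tendsto (fun n => ∫ x, ∑ y, |f t n x y - pstar x y| ∂μ) atTop (nhds 0))
    (g : ℕ → X → Fin K)
    (hg : ∀ n x y, (T : ℝ)⁻¹ * ∑ t, f t n x y ≤ (T : ℝ)⁻¹ * ∑ t, f t n x (g n x))
    (hgm : ∀ n, Measurable fun x => pstar x (g n x)) :
    Tendsto (fun n => ∫ x, ∑ y, |(T : ℝ)⁻¹ * (∑ t, f t n x y) - pstar x y| ∂μ)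
        atTop (nhds 0) ∧
    Tendsto (fun n => ∫ x, (1 - pstar x (g n x)) ∂μ) atTop
      (nhds (∫ x, (1 - ⨆ y, pstar x y) ∂μ)) := by
  haveI : Nonempty (Fin K) := ⟨⟨0, hK⟩⟩
  have hT' : (0:ℝ) < T := by exact_mod_cast hT
  set A : ℕ → X → Fin K → ℝ := fun n x y => (T : ℝ)⁻¹ * (∑ t, f t n x y) with hA
  -- pstar values in [0,1]
  have hple : ∀ x y, pstar x y ≤ 1 := by
    intro x y
    calc pstar x y ≤ ∑ y', pstar x y' :=
          Finset.single_le_sum (fun y' _ => hps0 x y') (Finset.mem_univ y)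
    _ = 1 := hps1 x
  -- integrability of the per-t L¹ distances
  have hint : ∀ t n, Integrable (fun x => ∑ y, |f t n x y - pstar x y|) μ := by
    intro t n
    refine ⟨(Finset.measurable_sum _ fun y _ => ((hmeas t n y).sub (hpm y)).abs).aestronglyMeasurable, ?_⟩
    refine HasFiniteIntegral.of_bounded (C := 2) (Filter.Eventually.of_forall fun x => ?_)
    have : ∑ y, |f t n x y - pstar x y| ≤ ∑ y, (f t n x y + pstar x y) := by
      refine Finset.sum_le_sum fun y _ => ?_
      calc |f t n x y - pstar x y| ≤ |f t n x y| + |pstar x y| := abs_sub _ _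
      _ = f t n x y + pstar x y := by
            rw [abs_of_nonneg (hnn t n x y), abs_of_nonneg (hps0 x y)]
    rw [Real.norm_eq_abs, abs_of_nonneg (Finset.sum_nonneg fun y _ => abs_nonneg _)]
    calc ∑ y, |f t n x y - pstar x y| ≤ ∑ y, (f t n x y + pstar x y) := this
    _ = 1 + 1 := by rw [Finset.sum_add_distrib, hsum1, hps1]
    _ = 2 := by norm_num
  -- pointwise bound for the averaged distance
  have hptw : ∀ n x, ∑ y, |A n x y - pstar x y| ≤ (T:ℝ)⁻¹ * ∑ t, ∑ y, |f t n x y - pstar x y| := by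
    intro n x
    have : ∀ y, |A n x y - pstar x y| ≤ (T:ℝ)⁻¹ * ∑ t, |f t n x y - pstar x y| := by
      intro y
      have h1 : A n x y - pstar x y = (T:ℝ)⁻¹ * ∑ t, (f t n x y - pstar x y) := by
        rw [Finset.sum_sub_distrib]
        simp [hA, mul_sub]
        field_simp
      rw [h1, abs_mul, abs_of_nonneg (by positivity : (0:ℝ) ≤ (T:ℝ)⁻¹)]
      exact mul_le_mul_of_nonneg_left (Finset.abs_sum_le_sum_abs _ _) (by positivity)
    calc ∑ y, |A n x y - pstar x y| ≤ ∑ y, (T:ℝ)⁻¹ * ∑ t, |f t n x y - pstar x y| :=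
          Finset.sum_le_sum fun y _ => this y
    _ = (T:ℝ)⁻¹ * ∑ t, ∑ y, |f t n x y - pstar x y| := by
          rw [← Finset.mul_sum, Finset.sum_comm]
  -- integral bound
  have hIle : ∀ n, ∫ x, ∑ y, |A n x y - pstar x y| ∂μ
      ≤ (T:ℝ)⁻¹ * ∑ t, ∫ x, ∑ y, |f t n x y - pstar x y| ∂μ := by
    intro n
    have hintsum : Integrable (fun x => (T:ℝ)⁻¹ * ∑ t, ∑ y, |f t n x y - pstar x y|) μ :=
      ((integrable_finset_sum _ fun t _ => hint t n).const_mul _)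
    calc ∫ x, ∑ y, |A n x y - pstar x y| ∂μ
        ≤ ∫ x, (T:ℝ)⁻¹ * ∑ t, ∑ y, |f t n x y - pstar x y| ∂μ := by
          refine integral_mono_of_nonneg (Filter.Eventually.of_forall fun x =>
            Finset.sum_nonneg fun y _ => abs_nonneg _) hintsum
            (Filter.Eventually.of_forall fun x => hptw n x)
    _ = (T:ℝ)⁻¹ * ∑ t, ∫ x, ∑ y, |f t n x y - pstar x y| ∂μ := by
          rw [integral_const_mul, integral_finset_sum _ fun t _ => hint t n]
  have hRHS : Tendsto (fun n => (T:ℝ)⁻¹ * ∑ t, ∫ x, ∑ y, |f t n x y - pstar x y| ∂μ)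
      atTop (nhds 0) := by
    have := (tendsto_finset_sum (Finset.univ : Finset (Fin T)) fun t _ => hcons t).const_mul (T:ℝ)⁻¹
    simpa using this
  have hInn : ∀ n, 0 ≤ ∫ x, ∑ y, |A n x y - pstar x y| ∂μ := fun n =>
    integral_nonneg fun x => Finset.sum_nonneg fun y _ => abs_nonneg _
  have part1 : Tendsto (fun n => ∫ x, ∑ y, |A n x y - pstar x y| ∂μ) atTop (nhds 0) :=
    squeeze_zero hInn hIle hRHS
  refine ⟨part1, ?_⟩
  -- part 2
  have hsupm : Measurable (fun x => ⨆ y, pstar x y) := by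
    have : (fun x => ⨆ y, pstar x y)
        = Finset.univ.sup' Finset.univ_nonempty (fun y x => pstar x y) := by
      funext x; rw [Finset.sup'_apply, Finset.sup'_univ_eq_ciSup]
    rw [this]
    exact Finset.measurable_sup' Finset.univ_nonempty fun y _ => hpm y
  have hbdd : ∀ x, BddAbove (Set.range fun y => pstar x y) := fun x => Set.Finite.bddAbove (Set.finite_range _)
  have hsup_le1 : ∀ x, ⨆ y, pstar x y ≤ 1 := fun x => ciSup_le fun y => hple x y
  have hle_sup : ∀ x y, pstar x y ≤ ⨆ y, pstar x y := fun x y => le_ciSup (hbdd x) y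
  -- pointwise: sup - p(g n x) ≤ 2 * ∑ |A - p|
  have hkey : ∀ n x, (⨆ y, pstar x y) - pstar x (g n x) ≤ 2 * ∑ y, |A n x y - pstar x y| := by
    intro n x
    obtain ⟨y0, hy0⟩ := exists_eq_ciSup_of_finite (f := fun y => pstar x y)
    rw [← hy0]
    have h1 : pstar x y0 - pstar x (g n x)
        ≤ (pstar x y0 - A n x y0) + (A n x (g n x) - pstar x (g n x)) := by
      have := hg n x y0
      simp only [hA]
      linarith
    have h2 : pstar x y0 - A n x y0 ≤ |A n x y0 - pstar x y0| := by
      rw [abs_sub_comm]; exact le_abs_self _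
    have h3 : A n x (g n x) - pstar x (g n x) ≤ |A n x (g n x) - pstar x (g n x)| := le_abs_self _
    have h4 : |A n x y0 - pstar x y0| ≤ ∑ y, |A n x y - pstar x y| :=
      Finset.single_le_sum (f := fun y => |A n x y - pstar x y|) (fun y _ => abs_nonneg _) (Finset.mem_univ y0)
    have h5 : |A n x (g n x) - pstar x (g n x)| ≤ ∑ y, |A n x y - pstar x y| :=
      Finset.single_le_sum (f := fun y => |A n x y - pstar x y|) (fun y _ => abs_nonneg _) (Finset.mem_univ (g n x))
    linarith
  -- integrabilities
  have hint_sup : Integrable (fun x => (1:ℝ) - ⨆ y, pstar x y) μ := by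
    refine ⟨((measurable_const.sub hsupm)).aestronglyMeasurable, ?_⟩
    refine HasFiniteIntegral.of_bounded (C := 1) (Filter.Eventually.of_forall fun x => ?_)
    rw [Real.norm_eq_abs, abs_of_nonneg (by linarith [hsup_le1 x])]
    have := hle_sup x ⟨0, hK⟩
    linarith [hps0 x ⟨0, hK⟩]
  have hint_D : ∀ n, Integrable (fun x => (⨆ y, pstar x y) - pstar x (g n x)) μ := by
    intro n
    refine ⟨(hsupm.sub (hgm n)).aestronglyMeasurable, ?_⟩
    refine HasFiniteIntegral.of_bounded (C := 1) (Filter.Eventually.of_forall fun x => ?_)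
    rw [Real.norm_eq_abs, abs_of_nonneg (by linarith [hle_sup x (g n x)])]
    linarith [hsup_le1 x, hps0 x (g n x)]
  have hint_I : ∀ n, Integrable (fun x => ∑ y, |A n x y - pstar x y|) μ := by
    intro n
    refine ⟨(Finset.measurable_sum _ fun y _ =>
      (((Finset.measurable_sum Finset.univ fun t _ => hmeas t n y).const_mul (T:ℝ)⁻¹).sub (hpm y)).abs).aestronglyMeasurable, ?_⟩
    refine HasFiniteIntegral.of_bounded (C := 2) (Filter.Eventually.of_forall fun x => ?_)
    rw [Real.norm_eq_abs, abs_of_nonneg (Finset.sum_nonneg fun y _ => abs_nonneg _)]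
    calc ∑ y, |A n x y - pstar x y| ≤ (T:ℝ)⁻¹ * ∑ t, ∑ y, |f t n x y - pstar x y| := hptw n x
    _ ≤ (T:ℝ)⁻¹ * ∑ t : Fin T, (2:ℝ) := by
        refine mul_le_mul_of_nonneg_left (Finset.sum_le_sum fun t _ => ?_) (by positivity)
        calc ∑ y, |f t n x y - pstar x y| ≤ ∑ y, (f t n x y + pstar x y) := by
              refine Finset.sum_le_sum fun y _ => ?_
              calc |f t n x y - pstar x y| ≤ |f t n x y| + |pstar x y| := abs_sub _ _
              _ = f t n x y + pstar x y := by
                  rw [abs_of_nonneg (hnn t n x y), abs_of_nonneg (hps0 x y)]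
        _ = 2 := by rw [Finset.sum_add_distrib, hsum1, hps1]; norm_num
    _ = 2 := by
        rw [Finset.sum_const, Finset.card_univ, Fintype.card_fin, nsmul_eq_mul]
        field_simp
  -- D n → 0
  have hD0 : Tendsto (fun n => ∫ x, ((⨆ y, pstar x y) - pstar x (g n x)) ∂μ) atTop (nhds 0) := by
    refine squeeze_zero (fun n => integral_nonneg fun x => sub_nonneg.2 (hle_sup x (g n x)))
      (fun n => ?_) (by simpa using part1.const_mul 2)
    calc ∫ x, ((⨆ y, pstar x y) - pstar x (g n x)) ∂μ
        ≤ ∫ x, 2 * ∑ y, |A n x y - pstar x y| ∂μ := by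
          refine integral_mono (hint_D n) ((hint_I n).const_mul 2) fun x => hkey n x
    _ = 2 * ∫ x, ∑ y, |A n x y - pstar x y| ∂μ := integral_const_mul _ _
  have hdecomp : ∀ n, ∫ x, (1 - pstar x (g n x)) ∂μ
      = (∫ x, (1 - ⨆ y, pstar x y) ∂μ) + ∫ x, ((⨆ y, pstar x y) - pstar x (g n x)) ∂μ := by
    intro n
    rw [← integral_add hint_sup (hint_D n)]
    congr 1; funext x; ring
  simp only [hdecomp]
  have := (tendsto_const_nhds (x := ∫ x, (1 - ⨆ y, pstar x y) ∂μ) (f := atTop)).add hD0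
  simpa using this
end
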